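/- Let H be a relevant position of the game influence and let −H be the position obtained from H by exchanging the sets L and R and reversing the orientation of every arc. Then the disjoint union H + (−H) satisfies Ls(H + (−H)) = 0 and Rs(H + (−H)) = 0. -/

import Mathlib

namespace Influence

open Finset

/-- A position of the game `influence`: a finite directed graph with vertex set `V`,
arc set `A`, and the set `left` of Left (black) vertices; Right's vertices are `V \ left`. -/
structure Pos (α : Type) [DecidableEq α] where
  V : Finset α
  A : Finset (α × α)
  left : Finset α

variable {α : Type} [DecidableEq α]

namespace Pos

/-- The set of Right vertices. -/
def R (G : Pos α) : Finset α := G.V \ G.left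

/-- Well-formedness: arcs join vertices, and Left vertices are vertices. -/
def WF (G : Pos α) : Prop :=
  (∀ p ∈ G.A, p.1 ∈ G.V ∧ p.2 ∈ G.V) ∧ G.left ⊆ G.V

open Classical in
/-- `Succ G x`: vertices reachable from `x` by a directed path (including `x` itself). -/
noncomputable def Succ (G : Pos α) (x : α) : Finset α :=
  G.V.filter (fun z => Relation.ReflTransGen (fun a b => (a, b) ∈ G.A) x z)

open Classical in
/-- `Pred G y`: vertices from which `y` is reachable by a directed path (including `y`). -/
noncomputable def Pred (G : Pos α) (y : α) : Finset α :=
  G.V.filter (fun z => Relation.ReflTransGen (fun a b => (a, b) ∈ G.A) z y)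

open Classical in
noncomputable def ForcL (G : Pos α) : Finset α :=
  G.left.filter (fun x => G.Succ x ⊆ G.left)

open Classical in
noncomputable def ForcR (G : Pos α) : Finset α :=
  G.R.filter (fun y => G.Pred y ⊆ G.R)

noncomputable def Forc (G : Pos α) : Finset α := G.ForcL ∪ G.ForcR

/-- A relevant position: no forced vertices. -/
def Relevant (G : Pos α) : Prop := G.Forc = ∅

/-- The induced subgraph `G ∖ S` on `V(G) \ S`. -/
def erase (G : Pos α) (S : Finset α) : Pos α :=
  ⟨G.V \ S, G.A.filter (fun p => p.1 ∈ G.V \ S ∧ p.2 ∈ G.V \ S), G.left \ S⟩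

open Classical in
/-- The set of vertices removed when playing `x`:  for `x ∈ L`,
`Rmv(G,x) = Succ(G,x) ∪ Forc(G ∖ Succ(G,x))`; for `y ∈ R`,
`Rmv(G,y) = Pred(G,y) ∪ Forc(G ∖ Pred(G,y))`. -/
noncomputable def Rmv (G : Pos α) (x : α) : Finset α :=
  if x ∈ G.left then G.Succ x ∪ (G.erase (G.Succ x)).Forc
  else G.Pred x ∪ (G.erase (G.Pred x)).Forc

/-- The resulting relevant position `G_x` after the move `x`. -/
noncomputable def move (G : Pos α) (x : α) : Pos α := G.erase (G.Rmv x)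

mutual
/-- Auxiliary (fuel-indexed) score of Left playing first. -/
noncomputable def sL1Aux : ℕ → Pos α → ℕ
  | 0, _ => 0
  | k + 1, G =>
      if G.left.Nonempty then
        G.left.sup (fun x => (G.Rmv x).card + sL2Aux k (G.move x))
      else 0

/-- Auxiliary (fuel-indexed) score of Left playing second. -/
noncomputable def sL2Aux : ℕ → Pos α → ℕ
  | 0, _ => 0
  | k + 1, G =>
      if h : G.R.Nonempty then G.R.inf' h (fun y => sL1Aux k (G.move y))
      else 0
end

mutual
/-- Auxiliary (fuel-indexed) score of Right playing first. -/
noncomputable def sR1Aux : ℕ → Pos α → ℕ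
  | 0, _ => 0
  | k + 1, G =>
      if G.R.Nonempty then
        G.R.sup (fun y => (G.Rmv y).card + sR2Aux k (G.move y))
      else 0

/-- Auxiliary (fuel-indexed) score of Right playing second. -/
noncomputable def sR2Aux : ℕ → Pos α → ℕ
  | 0, _ => 0
  | k + 1, G =>
      if h : G.left.Nonempty then G.left.inf' h (fun x => sR1Aux k (G.move x))
      else 0
end

/-- `s^L_1(G)`: the score of Left when Left plays first (optimal play). -/
noncomputable def sL1 (G : Pos α) : ℕ := sL1Aux G.V.card G

/-- `s^L_2(G)`: the score of Left when Right plays first (optimal play). -/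
noncomputable def sL2 (G : Pos α) : ℕ := sL2Aux G.V.card G

/-- `s^R_1(G)`: the score of Right when Right plays first (optimal play). -/
noncomputable def sR1 (G : Pos α) : ℕ := sR1Aux G.V.card G

/-- `s^R_2(G)`: the score of Right when Left plays first (optimal play). -/
noncomputable def sR2 (G : Pos α) : ℕ := sR2Aux G.V.card G

/-- The Left score `Ls(G) = s^L_1(G) - s^R_2(G)`. -/
noncomputable def Ls (G : Pos α) : ℤ := (G.sL1 : ℤ) - (G.sR2 : ℤ)

/-- The Right score `Rs(G) = s^L_2(G) - s^R_1(G)`. -/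
noncomputable def Rs (G : Pos α) : ℤ := (G.sL2 : ℤ) - (G.sR1 : ℤ)

/-- Disjoint union (game sum) of two positions. -/
def union (G G' : Pos α) : Pos α := ⟨G.V ∪ G'.V, G.A ∪ G'.A, G.left ∪ G'.left⟩

/-- The empty position. -/
protected def empty : Pos α := ⟨∅, ∅, ∅⟩

end Pos

/-- The sum of a finite list of positions. -/
def sumList (l : List (Pos α)) : Pos α := l.foldr Pos.union Pos.empty

open Classical in
/-- `G` is a segment: its vertex set is a set of at least two consecutive integers,
Left's vertices are the even ones, Right's the odd ones, and there is an arc from each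
even vertex to each of its (odd) neighbours `±1` lying in the vertex set. -/
def IsSegment (G : Pos ℤ) : Prop :=
  2 ≤ G.V.card ∧
  (∀ i j k : ℤ, i ∈ G.V → j ∈ G.V → i ≤ k → k ≤ j → k ∈ G.V) ∧
  G.left = G.V.filter (fun n => Even n) ∧
  G.A = (G.V ×ˢ G.V).filter (fun p => Even p.1 ∧ (p.2 = p.1 + 1 ∨ p.2 = p.1 - 1))

/-- `G` is the finite disjoint union (game sum) of the list `l` of segments. -/
def IsSegUnion (G : Pos ℤ) (l : List (Pos ℤ)) : Prop :=
  (∀ H ∈ l, IsSegment H) ∧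
  l.Pairwise (fun H H' => Disjoint H.V H'.V) ∧
  G = sumList l


open Classical in
/-- `G` is an alternated cycle: obtained from a segment `S` with an even number of
vertices by adding the arc `(x, y)` where `x` is the endpoint of `S` in `L` (even) and
`y` the endpoint in `R` (odd). -/
def IsAltCycle (G : Pos ℤ) : Prop :=
  ∃ (S : Pos ℤ) (x y : ℤ), IsSegment S ∧ Even S.V.card ∧
    x ∈ S.V ∧ y ∈ S.V ∧ Even x ∧ ¬ Even y ∧
    (∀ z ∈ S.V, min x y ≤ z ∧ z ≤ max x y) ∧
    G.V = S.V ∧ G.left = S.left ∧ G.A = insert (x, y) S.A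

open Classical in
/-- `T` is (a copy of) the oriented tree `T_n^c`: a rooted tree of depth `n+1`, all arcs
oriented from parent to child, in which every vertex at level `k ≤ n-1` has exactly `3`
children, every vertex at level `n` has exactly `c` children, the leaves (level `n+1`)
are the Right vertices and all other vertices are Left vertices. -/
def IsTnc (n c : ℕ) (T : Pos α) : Prop :=
  T.WF ∧ ∃ lvl : α → ℕ,
    (∀ v ∈ T.V, lvl v ≤ n + 1) ∧
    T.left = T.V.filter (fun v => lvl v ≤ n) ∧
    (∃! r, r ∈ T.V ∧ lvl r = 0) ∧
    (∀ p ∈ T.A, lvl p.2 = lvl p.1 + 1) ∧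
    (∀ v ∈ T.V, 0 < lvl v → ∃! u, (u, v) ∈ T.A) ∧
    (∀ v ∈ T.V, lvl v < n → (T.V.filter (fun w => (v, w) ∈ T.A)).card = 3) ∧
    (∀ v ∈ T.V, lvl v = n → (T.V.filter (fun w => (v, w) ∈ T.A)).card = c)

/-- `J` is (a copy of) `J_n^c`, the disjoint union of two disjoint copies of `T_n^c`. -/
def IsJnc (n c : ℕ) (J : Pos α) : Prop :=
  ∃ T1 T2 : Pos α, IsTnc n c T1 ∧ IsTnc n c T2 ∧ Disjoint T1.V T2.V ∧ J = T1.union T2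

end Influence

open Influence Influence.Pos Finset

/-!
Right can answer every Left move in `H + (−H)` by its mirror image in the other component: the
two moves remove equally many vertices and lead to `H' + (−H')`, where `H'` is a move of `H`.
Hence Left, moving first, scores at most `|V(H)|`, and by the colour-reversing duality so does
Right. The game is zero-sum, `s^L_1 + s^R_2 = s^L_2 + s^R_1 = 2|V(H)|`, so it remains to see
that moving first never hurts Left: `s^L_2 ≤ s^L_1`. This follows by induction from the fact
that a Right move never increases Left's scores, which rests on commuting moves. In a relevant
position `Rmv(G, x) = Succ(G, x) ∪ {v ∈ L : Succ(G, v) ⊆ Succ(G, x) ∪ L}` for `x ∈ L`, and with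
this description two moves that do not remove each other can be played in either order with the
same result.
-/

theorem Finset.mem_image_iff_of_injOn {α β : Type} [DecidableEq β] {f : α → β}
    {s t : Finset α} {a : α} (hf : Set.InjOn f s) (ht : t ⊆ s) (ha : a ∈ s) :
    f a ∈ t.image f ↔ a ∈ t := by
  rw [← mem_coe, coe_image]; exact hf.mem_image_iff (coe_subset.2 ht) ha

theorem Finset.sup_add_inf'_of_add_eq {ι : Type} {s : Finset ι} (hs : s.Nonempty)
    {a c : ι → ℕ} {n : ℕ} (h : ∀ i ∈ s, a i + c i = n) : s.sup a + s.inf' hs c = n := by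
  obtain ⟨i, hi, hsup⟩ := exists_mem_eq_sup s hs a
  obtain ⟨j, hj, hinf⟩ := exists_mem_eq_inf' hs c
  have := le_sup (f := a) hj
  have := inf'_le c hi
  have := h i hi
  have := h j hj
  omega

namespace Influence.Pos

variable {α : Type} [DecidableEq α] {G : Pos α} {S T : Finset α} {a b v x y : α}

protected theorem ext {G G' : Pos α} (hV : G.V = G'.V) (hA : G.A = G'.A)
    (hL : G.left = G'.left) : G = G' := by
  cases G; cases G'; simp_all

def Reach (G : Pos α) : α → α → Prop := Relation.ReflTransGen fun a b => (a, b) ∈ G.A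

theorem mem_Succ : b ∈ G.Succ a ↔ b ∈ G.V ∧ G.Reach a b := by
  classical exact mem_filter

theorem mem_Pred : a ∈ G.Pred b ↔ a ∈ G.V ∧ G.Reach a b := by
  classical exact mem_filter

theorem mem_ForcL : x ∈ G.ForcL ↔ x ∈ G.left ∧ G.Succ x ⊆ G.left := by
  unfold ForcL; exact mem_filter

theorem mem_ForcR : y ∈ G.ForcR ↔ y ∈ G.R ∧ G.Pred y ⊆ G.R := by
  unfold ForcR; exact mem_filter

theorem mem_R : x ∈ G.R ↔ x ∈ G.V ∧ x ∉ G.left := mem_sdiff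

theorem R_subset_V : G.R ⊆ G.V := sdiff_subset

theorem Succ_subset_V : G.Succ a ⊆ G.V := fun _ h => (mem_Succ.1 h).1

theorem Pred_subset_V : G.Pred b ⊆ G.V := fun _ h => (mem_Pred.1 h).1

theorem self_mem_Succ (ha : a ∈ G.V) : a ∈ G.Succ a := mem_Succ.2 ⟨ha, .refl⟩

theorem self_mem_Pred (hb : b ∈ G.V) : b ∈ G.Pred b := mem_Pred.2 ⟨hb, .refl⟩

theorem Succ_subset_Succ (h : b ∈ G.Succ a) : G.Succ b ⊆ G.Succ a := fun _ hc =>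
  mem_Succ.2 ⟨(mem_Succ.1 hc).1, (mem_Succ.1 h).2.trans (mem_Succ.1 hc).2⟩

theorem Relevant.ForcL_eq_empty (h : G.Relevant) : G.ForcL = ∅ := (union_eq_empty.1 h).1

theorem Relevant.ForcR_eq_empty (h : G.Relevant) : G.ForcR = ∅ := (union_eq_empty.1 h).2

@[simp] theorem erase_V (S : Finset α) : (G.erase S).V = G.V \ S := rfl

@[simp] theorem erase_left (S : Finset α) : (G.erase S).left = G.left \ S := rfl

theorem mem_erase_A {p : α × α} :
    p ∈ (G.erase S).A ↔ p ∈ G.A ∧ p.1 ∈ G.V \ S ∧ p.2 ∈ G.V \ S := mem_filter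

theorem erase_R (S : Finset α) : (G.erase S).R = G.R \ S := by
  ext; simp only [R, erase_V, erase_left, mem_sdiff]; tauto

theorem erase_erase (S T : Finset α) : (G.erase S).erase T = G.erase (S ∪ T) := by
  refine Pos.ext ?_ ?_ ?_
  · simp [sdiff_sdiff_left]
  · ext p; simp only [mem_erase_A, erase_V, mem_sdiff, mem_union]; tauto
  · simp [sdiff_sdiff_left]

theorem Reach.of_erase (h : (G.erase S).Reach a b) : G.Reach a b :=
  Relation.ReflTransGen.mono (fun _ _ hp => (mem_erase_A.1 hp).1) _ _ h

namespace WF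

variable (hwf : G.WF)
include hwf

theorem fst_mem {p : α × α} (hp : p ∈ G.A) : p.1 ∈ G.V := (hwf.1 p hp).1

theorem snd_mem {p : α × α} (hp : p ∈ G.A) : p.2 ∈ G.V := (hwf.1 p hp).2

protected theorem erase (S : Finset α) : (G.erase S).WF :=
  ⟨fun _ hp => (mem_erase_A.1 hp).2, sdiff_subset_sdiff hwf.2 le_rfl⟩

theorem reach_mem (h : G.Reach a b) (ha : a ∈ G.V) : b ∈ G.V := by
  induction h with
  | refl => exact ha
  | tail _ hcb => exact hwf.snd_mem hcb

theorem Forc_subset : G.Forc ⊆ G.V :=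
  union_subset (fun _ h => hwf.2 (mem_ForcL.1 h).1) fun _ h => R_subset_V (mem_ForcR.1 h).1

end WF

def IsSuccClosed (G : Pos α) (A : Finset α) : Prop := ∀ a ∈ A, G.Succ a ⊆ A

def IsPredClosed (G : Pos α) (B : Finset α) : Prop := ∀ b ∈ B, G.Pred b ⊆ B

theorem isSuccClosed_Succ (a : α) : G.IsSuccClosed (G.Succ a) := fun _ => Succ_subset_Succ

theorem Reach.erase (hwf : G.WF) (hS : G.IsSuccClosed S) (h : G.Reach a b)
    (hb : b ∈ G.V \ S) : (G.erase S).Reach a b := by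
  induction h with
  | refl => exact .refl
  | @tail c b _ hcb ih =>
    have hc : c ∈ G.V \ S := mem_sdiff.2 ⟨hwf.fst_mem hcb, fun hcS =>
      (mem_sdiff.1 hb).2 (hS c hcS (mem_Succ.2 ⟨(mem_sdiff.1 hb).1, .single hcb⟩))⟩
    exact (ih hc).tail (mem_erase_A.2 ⟨hcb, hc, hb⟩)

theorem Succ_erase_of_isSuccClosed (hwf : G.WF) (hS : G.IsSuccClosed S) (a : α) :
    (G.erase S).Succ a = G.Succ a \ S := by
  ext b
  simp only [mem_sdiff, mem_Succ, erase_V]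
  exact ⟨fun ⟨⟨hb, hbS⟩, h⟩ => ⟨⟨hb, h.of_erase⟩, hbS⟩,
    fun ⟨⟨hb, h⟩, hbS⟩ => ⟨⟨hb, hbS⟩, h.erase hwf hS (mem_sdiff.2 ⟨hb, hbS⟩)⟩⟩

theorem Pred_erase_of_isSuccClosed (hwf : G.WF) (hS : G.IsSuccClosed S) (hb : b ∉ S) :
    (G.erase S).Pred b = G.Pred b := by
  ext a
  simp only [mem_Pred, erase_V, mem_sdiff]
  refine ⟨fun ⟨⟨ha, _⟩, h⟩ => ⟨ha, h.of_erase⟩, fun ⟨ha, h⟩ => ?_⟩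
  have hbV := hwf.reach_mem h ha
  have haS : a ∉ S := fun haS => hb (hS a haS (mem_Succ.2 ⟨hbV, h⟩))
  exact ⟨⟨ha, haS⟩, h.erase hwf hS (mem_sdiff.2 ⟨hbV, hb⟩)⟩

/-- The negative `−G`, on the same vertex set. -/
def op (G : Pos α) : Pos α := ⟨G.V, G.A.image Prod.swap, G.R⟩

@[simp] theorem op_V : (op G).V = G.V := rfl

@[simp] theorem op_left : (op G).left = G.R := rfl

theorem mem_op_A {p : α × α} : p ∈ (op G).A ↔ p.swap ∈ G.A := by
  simp [op, Prod.swap_eq_iff_eq_swap]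

theorem op_R (hwf : G.WF) : (op G).R = G.left := Finset.sdiff_sdiff_eq_self hwf.2

theorem WF.op (hwf : G.WF) : (op G).WF :=
  ⟨fun _ hp => (hwf.1 _ (mem_op_A.1 hp)).symm, R_subset_V⟩

theorem op_erase (S : Finset α) : op (G.erase S) = (op G).erase S := by
  refine Pos.ext rfl ?_ (erase_R S)
  ext p; simp only [mem_op_A, mem_erase_A, op_V, Prod.fst_swap, Prod.snd_swap]; tauto

theorem reach_op : (op G).Reach a b ↔ G.Reach b a := by
  have : (fun a b => (a, b) ∈ (op G).A) = Function.swap fun a b => (a, b) ∈ G.A := by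
    ext; simp [mem_op_A]
  rw [Reach, this, Relation.reflTransGen_swap, Reach]

theorem op_Succ (a : α) : (op G).Succ a = G.Pred a := by
  ext; rw [mem_Succ, mem_Pred, reach_op, op_V]

theorem op_Pred (a : α) : (op G).Pred a = G.Succ a := by
  ext; rw [mem_Succ, mem_Pred, reach_op, op_V]

theorem op_ForcL : (op G).ForcL = G.ForcR := by
  ext; rw [mem_ForcL, mem_ForcR, op_left, op_Succ]

theorem op_ForcR (hwf : G.WF) : (op G).ForcR = G.ForcL := by
  ext; rw [mem_ForcL, mem_ForcR, op_R hwf, op_Pred]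

theorem op_Forc (hwf : G.WF) : (op G).Forc = G.Forc := by
  rw [Forc, Forc, op_ForcL, op_ForcR hwf, union_comm]

theorem relevant_op (hwf : G.WF) : (op G).Relevant ↔ G.Relevant := by
  rw [Relevant, Relevant, op_Forc hwf]

theorem Relevant.op (hwf : G.WF) (hrel : G.Relevant) : (op G).Relevant :=
  (relevant_op hwf).2 hrel

theorem op_Rmv (hwf : G.WF) (hx : x ∈ G.V) : (op G).Rmv x = G.Rmv x := by
  by_cases hxl : x ∈ G.left
  · have : x ∉ (op G).left := fun h => (mem_R.1 h).2 hxl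
    rw [Rmv, Rmv, if_neg this, if_pos hxl, op_Pred, ← op_erase, op_Forc (hwf.erase _)]
  · have : x ∈ (op G).left := mem_R.2 ⟨hx, hxl⟩
    rw [Rmv, Rmv, if_pos this, if_neg hxl, op_Succ, ← op_erase, op_Forc (hwf.erase _)]

theorem op_move (hwf : G.WF) (hx : x ∈ G.V) : (op G).move x = op (G.move x) := by
  rw [move, move, op_Rmv hwf hx, op_erase]

theorem isSuccClosed_op : (op G).IsSuccClosed S ↔ G.IsPredClosed S := by
  simp only [IsSuccClosed, IsPredClosed, op_Succ]

theorem isPredClosed_op : (op G).IsPredClosed S ↔ G.IsSuccClosed S := by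
  simp only [IsSuccClosed, IsPredClosed, op_Pred]

theorem Succ_erase_of_isPredClosed (hwf : G.WF) (hS : G.IsPredClosed S) (ha : a ∉ S) :
    (G.erase S).Succ a = G.Succ a := by
  rw [← op_Pred, op_erase, Pred_erase_of_isSuccClosed hwf.op (isSuccClosed_op.2 hS) ha,
    op_Pred]

/-- For relevant `G` and `Succ`-closed `S` this is `S ∪ Forc(G ∖ S)`; in particular
`Rmv(G, x) = leftClosure G (Succ(G, x))` for `x ∈ L`. -/
noncomputable def leftClosure (G : Pos α) (S : Finset α) : Finset α :=
  S ∪ G.left.filter fun v => G.Succ v ⊆ S ∪ G.left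

theorem mem_leftClosure :
    v ∈ G.leftClosure S ↔ v ∈ S ∨ v ∈ G.left ∧ G.Succ v ⊆ S ∪ G.left := by
  rw [leftClosure, mem_union, mem_filter]

theorem subset_leftClosure : S ⊆ G.leftClosure S := subset_union_left

theorem leftClosure_mono (h : S ⊆ T) : G.leftClosure S ⊆ G.leftClosure T := fun v hv => by
  rw [mem_leftClosure] at hv ⊢
  exact hv.imp (@h v) fun ⟨hvl, hvs⟩ => ⟨hvl, hvs.trans (union_subset_union h le_rfl)⟩

theorem leftClosure_leftClosure_union (S T : Finset α) :
    G.leftClosure (G.leftClosure S ∪ T) = G.leftClosure (S ∪ T) := by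
  ext v
  have hL : G.leftClosure S ∪ T ∪ G.left = S ∪ T ∪ G.left := by
    ext; simp only [mem_union, mem_leftClosure]; tauto
  have hmono : G.Succ v ⊆ S ∪ G.left → G.Succ v ⊆ S ∪ T ∪ G.left :=
    fun h => h.trans (union_subset_union subset_union_left le_rfl)
  rw [mem_leftClosure, hL]
  simp only [mem_leftClosure, mem_union]
  tauto

theorem leftClosure_leftClosure (S : Finset α) :
    G.leftClosure (G.leftClosure S) = G.leftClosure S := by
  simpa using G.leftClosure_leftClosure_union S ∅

theorem IsSuccClosed.leftClosure (hS : G.IsSuccClosed S) :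
    G.IsSuccClosed (G.leftClosure S) := by
  intro v hv w hw
  rcases mem_leftClosure.1 hv with hvS | ⟨_, hvs⟩
  · exact subset_leftClosure (hS v hvS hw)
  · rcases mem_union.1 (hvs hw) with hwS | hwl
    · exact subset_leftClosure hwS
    · exact mem_leftClosure.2 (.inr ⟨hwl, (Succ_subset_Succ hw).trans hvs⟩)

theorem union_leftClosure_erase (hwf : G.WF) (hS : G.IsSuccClosed S) (T : Finset α) :
    S ∪ (G.erase S).leftClosure T = G.leftClosure (S ∪ T) := by
  have key : ∀ v, (G.Succ v \ S ⊆ T ∪ G.left \ S ↔ G.Succ v ⊆ S ∪ T ∪ G.left) := by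
    intro v
    simp only [subset_iff, mem_sdiff, mem_union]
    exact forall_congr' fun b => by tauto
  ext v
  simp only [mem_union, mem_leftClosure, erase_left, mem_sdiff,
    Succ_erase_of_isSuccClosed hwf hS, key]
  tauto

theorem leftClosure_erase_of_isPredClosed (hwf : G.WF) (hB : G.IsPredClosed S)
    (hT : Disjoint T S) : (G.erase S).leftClosure T = G.leftClosure T \ S := by
  have key : ∀ v ∈ G.left, v ∉ S →
      ((G.erase S).Succ v ⊆ T ∪ G.left \ S ↔ G.Succ v ⊆ T ∪ G.left) := by
    intro v hvl hvS
    have hout : ∀ b ∈ G.Succ v, b ∉ S := fun b hb hbS =>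
      hvS (hB b hbS (mem_Pred.2 ⟨hwf.2 hvl, (mem_Succ.1 hb).2⟩))
    rw [Succ_erase_of_isPredClosed hwf hB hvS]
    simp only [subset_iff, mem_union, mem_sdiff]
    exact forall_congr' fun b => by have := hout b; tauto
  ext v
  simp only [mem_sdiff, mem_leftClosure, erase_left]
  have hvT : v ∈ T → v ∉ S := fun h => disjoint_left.1 hT h
  constructor
  · rintro (hv | ⟨⟨hvl, hvS⟩, hvs⟩)
    · exact ⟨.inl hv, hvT hv⟩
    · exact ⟨.inr ⟨hvl, (key v hvl hvS).1 hvs⟩, hvS⟩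
  · rintro ⟨hv | ⟨hvl, hvs⟩, hvS⟩
    · exact .inl hv
    · exact .inr ⟨⟨hvl, hvS⟩, (key v hvl hvS).2 hvs⟩

theorem ForcL_eq_leftClosure_empty : G.ForcL = G.leftClosure ∅ := by
  ext; simp [mem_ForcL, mem_leftClosure]

theorem union_ForcL_erase (hwf : G.WF) (hS : G.IsSuccClosed S) :
    S ∪ (G.erase S).ForcL = G.leftClosure S := by
  rw [ForcL_eq_leftClosure_empty, union_leftClosure_erase hwf hS, union_empty]

theorem ForcR_erase_of_isSuccClosed (hwf : G.WF) (hS : G.IsSuccClosed S) :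
    (G.erase S).ForcR = G.ForcR \ S := by
  rw [← op_ForcL, ← op_ForcL, op_erase, ForcL_eq_leftClosure_empty, ForcL_eq_leftClosure_empty,
    leftClosure_erase_of_isPredClosed hwf.op (isPredClosed_op.2 hS) (disjoint_empty_left _)]

section RelevantRmv

variable (hwf : G.WF) (hrel : G.Relevant)
include hwf hrel

theorem Rmv_eq_leftClosure (hx : x ∈ G.left) : G.Rmv x = G.leftClosure (G.Succ x) := by
  have hS := isSuccClosed_Succ (G := G) x
  rw [Rmv, if_pos hx, Forc, ← union_assoc, union_ForcL_erase hwf hS,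
    ForcR_erase_of_isSuccClosed hwf hS, hrel.ForcR_eq_empty, empty_sdiff, union_empty]

theorem isSuccClosed_Rmv (hx : x ∈ G.left) : G.IsSuccClosed (G.Rmv x) :=
  Rmv_eq_leftClosure hwf hrel hx ▸ (isSuccClosed_Succ x).leftClosure

theorem isPredClosed_Rmv (hy : y ∈ G.R) : G.IsPredClosed (G.Rmv y) := by
  rw [← isSuccClosed_op, ← op_Rmv hwf (R_subset_V hy)]
  exact isSuccClosed_Rmv hwf.op (hrel.op hwf) hy

theorem Relevant.move_of_mem_left (hx : x ∈ G.left) : (G.move x).Relevant := by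
  have hS := isSuccClosed_Rmv hwf hrel hx
  have hsub : (G.move x).ForcL ⊆ G.Rmv x := by
    have h := union_ForcL_erase hwf hS
    rw [Rmv_eq_leftClosure hwf hrel hx, leftClosure_leftClosure] at h
    rw [move, Rmv_eq_leftClosure hwf hrel hx]
    exact union_eq_left.1 h
  have hdisj : Disjoint (G.Rmv x) (G.move x).ForcL :=
    disjoint_of_subset_right (fun _ h => (mem_ForcL.1 h).1) disjoint_sdiff
  rw [Relevant, Forc, (disjoint_self_iff_empty _).1 (disjoint_of_subset_left hsub hdisj), move,
    ForcR_erase_of_isSuccClosed hwf hS, hrel.ForcR_eq_empty, empty_sdiff, union_empty]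

end RelevantRmv

theorem Rmv_subset_V (hwf : G.WF) (x : α) : G.Rmv x ⊆ G.V := by
  have h : ∀ B ⊆ G.V, B ∪ (G.erase B).Forc ⊆ G.V := fun B hB =>
    union_subset hB ((hwf.erase B).Forc_subset.trans sdiff_subset)
  unfold Rmv; split_ifs
  exacts [h _ Succ_subset_V, h _ Pred_subset_V]

theorem mem_Rmv_self (hx : x ∈ G.V) : x ∈ G.Rmv x := by
  unfold Rmv; split_ifs
  exacts [mem_union_left _ (self_mem_Succ hx), mem_union_left _ (self_mem_Pred hx)]

theorem Pred_subset_Rmv (hy : y ∈ G.R) : G.Pred y ⊆ G.Rmv y := by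
  rw [Rmv, if_neg (mem_R.1 hy).2]; exact subset_union_left

theorem move_R (y : α) : (G.move y).R = G.R \ G.Rmv y := erase_R _

theorem WF.move (hwf : G.WF) (x : α) : (G.move x).WF := hwf.erase _

theorem card_move_add (hwf : G.WF) (x : α) : #(G.move x).V + #(G.Rmv x) = #G.V :=
  card_sdiff_add_card_eq_card (Rmv_subset_V hwf x)

theorem card_move_le (x : α) : #(G.move x).V ≤ #G.V := card_le_card sdiff_subset

theorem card_move_lt (hwf : G.WF) (hx : x ∈ G.V) : #(G.move x).V < #G.V := by
  have := card_move_add hwf x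
  have := card_pos.2 ⟨x, mem_Rmv_self hx⟩
  omega

theorem Relevant.move (hwf : G.WF) (hrel : G.Relevant) (hx : x ∈ G.V) :
    (G.move x).Relevant := by
  by_cases hxl : x ∈ G.left
  · exact hrel.move_of_mem_left hwf hxl
  · rw [← relevant_op (hwf.move x), ← op_move hwf hx]
    exact (hrel.op hwf).move_of_mem_left hwf.op (mem_R.2 ⟨hx, hxl⟩)

theorem move_move (a b : α) : (G.move a).move b = G.erase (G.Rmv a ∪ (G.move a).Rmv b) :=
  erase_erase _ _

theorem mem_move_left : x ∈ (G.move y).left ↔ x ∈ G.left ∧ x ∉ G.Rmv y := mem_sdiff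

theorem mem_move_R : y ∈ (G.move x).R ↔ y ∈ G.R ∧ y ∉ G.Rmv x := by
  rw [move_R, mem_sdiff]

theorem op_Rmv_union_Rmv_move (hwf : G.WF) {x' : α} (hx : x ∈ G.V) (hx' : x' ∈ G.V)
    (h : x' ∉ G.Rmv x) :
    (op G).Rmv x ∪ ((op G).move x).Rmv x' = G.Rmv x ∪ (G.move x).Rmv x' := by
  rw [op_Rmv hwf hx, op_move hwf hx, op_Rmv (hwf.move x) (mem_sdiff.2 ⟨hx', h⟩)]

section Commute

variable (hwf : G.WF) (hrel : G.Relevant)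
include hwf hrel

theorem notMem_Rmv_of_notMem_Rmv (hx : x ∈ G.left) (hy : y ∈ G.R) (h : x ∉ G.Rmv y) :
    y ∉ G.Rmv x := by
  rw [Rmv_eq_leftClosure hwf hrel hx, mem_leftClosure]
  rintro (hyx | ⟨hyl, _⟩)
  · exact h (Pred_subset_Rmv hy (mem_Pred.2 ⟨hwf.2 hx, (mem_Succ.1 hyx).2⟩))
  · exact (mem_R.1 hy).2 hyl

/-- `Rmv(G, y)` is `Pred`-closed, so erasing it changes neither `Succ(G, x)` nor, outside of it,
the Left closure. -/
theorem Rmv_move_of_mem_R (hx : x ∈ G.left) (hy : y ∈ G.R) (h : x ∉ G.Rmv y) :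
    (G.move y).Rmv x = G.Rmv x \ G.Rmv y := by
  have hB := isPredClosed_Rmv hwf hrel hy
  have hdisj : Disjoint (G.Succ x) (G.Rmv y) := disjoint_left.2 fun z hz hzy =>
    h (hB z hzy (mem_Pred.2 ⟨hwf.2 hx, (mem_Succ.1 hz).2⟩))
  rw [Rmv_eq_leftClosure (hwf.move y) (hrel.move hwf (R_subset_V hy)) (mem_move_left.2 ⟨hx, h⟩),
    move, Succ_erase_of_isPredClosed hwf hB h, leftClosure_erase_of_isPredClosed hwf hB hdisj,
    Rmv_eq_leftClosure hwf hrel hx]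

theorem Rmv_move_of_mem_left (hx : x ∈ G.left) (hy : y ∈ G.R) (h : y ∉ G.Rmv x) :
    (G.move x).Rmv y = G.Rmv y \ G.Rmv x := by
  have hxV := hwf.2 hx
  have hyV := R_subset_V hy
  have := Rmv_move_of_mem_R hwf.op (hrel.op hwf) (x := y) (y := x) hy
    (by rwa [op_R hwf]) (by rwa [op_Rmv hwf hxV])
  rwa [op_move hwf hxV, op_Rmv (hwf.move x) (mem_sdiff.2 ⟨hyV, h⟩), op_Rmv hwf hxV,
    op_Rmv hwf hyV] at this

theorem move_move_comm_of_mem_left_of_mem_R (hx : x ∈ G.left) (hy : y ∈ G.R)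
    (h : x ∉ G.Rmv y) : (G.move y).move x = (G.move x).move y := by
  rw [move_move, move_move, Rmv_move_of_mem_R hwf hrel hx hy h,
    Rmv_move_of_mem_left hwf hrel hx hy (notMem_Rmv_of_notMem_Rmv hwf hrel hx hy h),
    union_sdiff_self_eq_union, union_sdiff_self_eq_union, union_comm]

theorem Rmv_union_Rmv_move {x' : α} (hx : x ∈ G.left) (hx' : x' ∈ G.left)
    (h : x' ∉ G.Rmv x) :
    G.Rmv x ∪ (G.move x).Rmv x' = G.leftClosure (G.Succ x ∪ G.Succ x') := by
  have hS := isSuccClosed_Rmv hwf hrel hx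
  rw [Rmv_eq_leftClosure (hwf.move x) (hrel.move hwf (hwf.2 hx)) (mem_move_left.2 ⟨hx', h⟩),
    move, Succ_erase_of_isSuccClosed hwf hS, union_leftClosure_erase hwf hS,
    union_sdiff_self_eq_union, Rmv_eq_leftClosure hwf hrel hx, leftClosure_leftClosure_union]

theorem Rmv_subset_Rmv_of_mem {z : α} (hx : x ∈ G.left) (hz : z ∈ G.left)
    (h : z ∈ G.Rmv x) : G.Rmv z ⊆ G.Rmv x := by
  have hsub := isSuccClosed_Rmv hwf hrel hx z h
  rw [Rmv_eq_leftClosure hwf hrel hx] at hsub ⊢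
  rw [Rmv_eq_leftClosure hwf hrel hz]
  exact (leftClosure_mono hsub).trans (leftClosure_leftClosure _).le

theorem Rmv_union_Rmv_move_of_mem {x' : α} (hx : x ∈ G.left) (hx' : x' ∈ G.left)
    (h : x' ∉ G.Rmv x) (h' : x ∈ G.Rmv x') : G.Rmv x ∪ (G.move x).Rmv x' = G.Rmv x' := by
  have hsub := isSuccClosed_Rmv hwf hrel hx' x h'
  rw [Rmv_eq_leftClosure hwf hrel hx'] at hsub ⊢
  rw [Rmv_union_Rmv_move hwf hrel hx hx' h, union_comm, ← leftClosure_leftClosure_union,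
    union_eq_left.2 hsub, leftClosure_leftClosure]

theorem move_move_comm_of_mem_R {y' : α} (hy : y ∈ G.R) (hy' : y' ∈ G.R) (h : y' ∉ G.Rmv y)
    (h' : y ∉ G.Rmv y') : (G.move y).move y' = (G.move y').move y := by
  have hyV := R_subset_V hy
  have hy'V := R_subset_V hy'
  rw [move_move, move_move, ← op_Rmv_union_Rmv_move hwf hyV hy'V h,
    ← op_Rmv_union_Rmv_move hwf hy'V hyV h',
    Rmv_union_Rmv_move hwf.op (hrel.op hwf) hy hy' (by rwa [op_Rmv hwf hyV]),
    Rmv_union_Rmv_move hwf.op (hrel.op hwf) hy' hy (by rwa [op_Rmv hwf hy'V]),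
    union_comm]

theorem move_move_of_mem_R {y' : α} (hy : y ∈ G.R) (hy' : y' ∈ G.R) (h : y' ∉ G.Rmv y)
    (h' : y ∈ G.Rmv y') : (G.move y).move y' = G.move y' := by
  have hyV := R_subset_V hy
  have hy'V := R_subset_V hy'
  rw [move_move, ← op_Rmv_union_Rmv_move hwf hyV hy'V h,
    Rmv_union_Rmv_move_of_mem hwf.op (hrel.op hwf) hy hy' (by rwa [op_Rmv hwf hyV])
      (by rwa [op_Rmv hwf hy'V]), op_Rmv hwf hy'V, move]

theorem move_eq_move_of_mem_R {y' : α} (hy : y ∈ G.R) (hy' : y' ∈ G.R) (h : y' ∈ G.Rmv y)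
    (h' : y ∈ G.Rmv y') : G.move y = G.move y' := by
  have hyV := R_subset_V hy
  have hy'V := R_subset_V hy'
  have hsub : ∀ {a b}, a ∈ G.R → b ∈ G.R → b ∈ G.Rmv a → G.Rmv b ⊆ G.Rmv a :=
    fun {a b} ha hb hab => by
      rw [← op_Rmv hwf (R_subset_V ha), ← op_Rmv hwf (R_subset_V hb)]
      exact Rmv_subset_Rmv_of_mem hwf.op (hrel.op hwf) ha hb
        (by rwa [op_Rmv hwf (R_subset_V ha)])
  rw [move, move, (hsub hy hy' h).antisymm (hsub hy' hy h')]

end Commute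

section Union

variable {G₁ G₂ : Pos α}

@[simp] theorem union_V : (G₁.union G₂).V = G₁.V ∪ G₂.V := rfl

@[simp] theorem union_A : (G₁.union G₂).A = G₁.A ∪ G₂.A := rfl

@[simp] theorem union_left : (G₁.union G₂).left = G₁.left ∪ G₂.left := rfl

theorem union_comm (G₁ G₂ : Pos α) : G₁.union G₂ = G₂.union G₁ :=
  Pos.ext (Finset.union_comm _ _) (Finset.union_comm _ _) (Finset.union_comm _ _)

theorem WF.union (h₁ : G₁.WF) (h₂ : G₂.WF) : (G₁.union G₂).WF := by
  refine ⟨fun p hp => ?_, union_subset_union h₁.2 h₂.2⟩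
  rcases mem_union.1 hp with hp | hp
  · exact ⟨mem_union_left _ (h₁.fst_mem hp), mem_union_left _ (h₁.snd_mem hp)⟩
  · exact ⟨mem_union_right _ (h₂.fst_mem hp), mem_union_right _ (h₂.snd_mem hp)⟩

variable (h₁ : G₁.WF) (h₂ : G₂.WF) (hd : Disjoint G₁.V G₂.V)
include h₁ h₂ hd

theorem R_union : (G₁.union G₂).R = G₁.R ∪ G₂.R := by
  ext a
  have : a ∈ G₁.V → a ∉ G₂.V := fun h => disjoint_left.1 hd h
  have : a ∈ G₁.left → a ∈ G₁.V := fun h => h₁.2 h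
  have : a ∈ G₂.left → a ∈ G₂.V := fun h => h₂.2 h
  simp only [R, union_V, union_left, mem_sdiff, mem_union]
  tauto

theorem op_union : op (G₁.union G₂) = (op G₁).union (op G₂) :=
  Pos.ext rfl (image_union _ _) (R_union h₁ h₂ hd)

theorem reach_union_iff (ha : a ∈ G₁.V) : (G₁.union G₂).Reach a b ↔ G₁.Reach a b := by
  refine ⟨fun h => ?_, Relation.ReflTransGen.mono (fun _ _ => mem_union_left _) _ _⟩
  induction h using Relation.ReflTransGen.head_induction_on with
  | refl => exact .refl
  | head hac _ ih =>
    have hac₁ := (mem_union.1 hac).resolve_right fun h => disjoint_left.1 hd ha (h₂.fst_mem h)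
    exact .head hac₁ (ih (h₁.snd_mem hac₁))

theorem Succ_union_left (ha : a ∈ G₁.V) : (G₁.union G₂).Succ a = G₁.Succ a := by
  ext b
  rw [mem_Succ, mem_Succ, reach_union_iff h₁ h₂ hd ha, union_V, mem_union]
  exact ⟨fun ⟨_, h⟩ => ⟨h₁.reach_mem h ha, h⟩, fun ⟨hb, h⟩ => ⟨.inl hb, h⟩⟩

theorem Pred_union_left (ha : a ∈ G₁.V) : (G₁.union G₂).Pred a = G₁.Pred a := by
  rw [← op_Succ, op_union h₁ h₂ hd, Succ_union_left h₁.op h₂.op hd ha, op_Succ]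

theorem mem_ForcL_union_left (ha : a ∈ G₁.V) :
    a ∈ (G₁.union G₂).ForcL ↔ a ∈ G₁.ForcL := by
  have hL : ∀ b ∈ G₁.V, b ∈ G₁.left ∪ G₂.left ↔ b ∈ G₁.left := fun b hb => by
    rw [mem_union, or_iff_left fun h => disjoint_left.1 hd hb (h₂.2 h)]
  rw [mem_ForcL, mem_ForcL, Succ_union_left h₁ h₂ hd ha, union_left, hL a ha]
  exact and_congr_right fun _ => forall₂_congr fun b hb => hL b (Succ_subset_V hb)

theorem ForcL_union : (G₁.union G₂).ForcL = G₁.ForcL ∪ G₂.ForcL := by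
  have hV : ∀ {K : Pos α} {c : α}, K.WF → c ∈ K.ForcL → c ∈ K.V :=
    fun hK h => hK.2 (mem_ForcL.1 h).1
  ext a
  rw [mem_union]
  by_cases ha₁ : a ∈ G₁.V
  · rw [mem_ForcL_union_left h₁ h₂ hd ha₁]
    exact (or_iff_left fun h => disjoint_left.1 hd ha₁ (hV h₂ h)).symm
  by_cases ha₂ : a ∈ G₂.V
  · rw [union_comm, mem_ForcL_union_left h₂ h₁ hd.symm ha₂]
    exact (or_iff_right fun h => ha₁ (hV h₁ h)).symm
  · refine iff_of_false (fun h => ?_) (fun h => h.elim (ha₁ ∘ hV h₁) (ha₂ ∘ hV h₂))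
    exact (mem_union.1 (hV (h₁.union h₂) h)).elim ha₁ ha₂

theorem ForcR_union : (G₁.union G₂).ForcR = G₁.ForcR ∪ G₂.ForcR := by
  rw [← op_ForcL, op_union h₁ h₂ hd, ForcL_union h₁.op h₂.op hd, op_ForcL, op_ForcL]

theorem Forc_union : (G₁.union G₂).Forc = G₁.Forc ∪ G₂.Forc := by
  rw [Forc, Forc, Forc, ForcL_union h₁ h₂ hd, ForcR_union h₁ h₂ hd, union_union_union_comm]

theorem Relevant.union (hr₁ : G₁.Relevant) (hr₂ : G₂.Relevant) :
    (G₁.union G₂).Relevant := by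
  rw [Relevant, Forc_union h₁ h₂ hd, hr₁, hr₂, union_empty]

theorem erase_union_left (hS : S ⊆ G₁.V) :
    (G₁.union G₂).erase S = (G₁.erase S).union G₂ := by
  have hS₂ : ∀ b ∈ G₂.V, b ∉ S := fun b hb hbS => disjoint_left.1 hd (hS hbS) hb
  refine Pos.ext ?_ ?_ ?_
  · ext b; have := hS₂ b; simp only [erase_V, union_V, mem_sdiff, mem_union]; tauto
  · ext p
    have := h₁.1 p
    have := h₂.1 p
    have := hS₂ p.1
    have := hS₂ p.2
    simp only [mem_erase_A, union_A, union_V, mem_sdiff, mem_union]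
    tauto
  · ext b
    have := hS₂ b
    have := @h₂.2 b
    simp only [erase_left, union_left, mem_sdiff, mem_union]
    tauto

theorem Rmv_union_left (hr₂ : G₂.Relevant) (ha : a ∈ G₁.V) :
    (G₁.union G₂).Rmv a = G₁.Rmv a := by
  have key : ∀ B ⊆ G₁.V, B ∪ ((G₁.union G₂).erase B).Forc = B ∪ (G₁.erase B).Forc :=
    fun B hB => by
      rw [erase_union_left h₁ h₂ hd hB, Forc_union (h₁.erase B) h₂
        (disjoint_of_subset_left sdiff_subset hd), hr₂, union_empty]
  have hL : a ∈ (G₁.union G₂).left ↔ a ∈ G₁.left := by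
    rw [union_left, mem_union, or_iff_left fun h => disjoint_left.1 hd ha (h₂.2 h)]
  unfold Rmv
  rw [Succ_union_left h₁ h₂ hd ha, Pred_union_left h₁ h₂ hd ha]
  by_cases hx : a ∈ G₁.left
  · rw [if_pos (hL.2 hx), if_pos hx]; exact key _ Succ_subset_V
  · rw [if_neg (mt hL.1 hx), if_neg hx]; exact key _ Pred_subset_V

theorem move_union_left (hr₂ : G₂.Relevant) (ha : a ∈ G₁.V) :
    (G₁.union G₂).move a = (G₁.move a).union G₂ := by
  rw [move, move, Rmv_union_left h₁ h₂ hd hr₂ ha,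
    erase_union_left h₁ h₂ hd (Rmv_subset_V h₁ a)]

theorem Rmv_union_right (hr₁ : G₁.Relevant) (ha : a ∈ G₂.V) :
    (G₁.union G₂).Rmv a = G₂.Rmv a := by
  rw [union_comm]; exact Rmv_union_left h₂ h₁ hd.symm hr₁ ha

theorem move_union_right (hr₁ : G₁.Relevant) (ha : a ∈ G₂.V) :
    (G₁.union G₂).move a = G₁.union (G₂.move a) := by
  rw [union_comm, move_union_left h₂ h₁ hd.symm hr₁ ha, union_comm]

end Union

section Map

variable {β : Type} [DecidableEq β]

def map (f : α → β) (G : Pos α) : Pos β :=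
  ⟨G.V.image f, G.A.image (Prod.map f f), G.left.image f⟩

variable {f : α → β}

theorem WF.map (hwf : G.WF) (f : α → β) : (G.map f).WF := by
  refine ⟨fun p hp => ?_, image_subset_image hwf.2⟩
  obtain ⟨q, hq, rfl⟩ := mem_image.1 hp
  exact ⟨mem_image_of_mem f (hwf.fst_mem hq), mem_image_of_mem f (hwf.snd_mem hq)⟩

variable (hf : Set.InjOn f G.V) (hwf : G.WF)
include hf hwf

theorem map_R : (G.map f).R = G.R.image f := (image_sdiff_of_injOn hf hwf.2).symm

theorem op_map : op (G.map f) = (op G).map f := by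
  refine Pos.ext rfl ?_ (map_R hf hwf)
  simp only [map, op, image_image]
  rfl

theorem map_Succ (ha : a ∈ G.V) : (G.map f).Succ (f a) = (G.Succ a).image f := by
  ext b'
  refine ⟨fun hb => ?_, fun hb => ?_⟩
  · obtain ⟨-, h⟩ := mem_Succ.1 hb
    clear hb
    induction h with
    | refl => exact mem_image_of_mem f (self_mem_Succ ha)
    | tail _ hcb ih =>
      obtain ⟨c, hc, rfl⟩ := mem_image.1 ih
      obtain ⟨p, hp, hpc⟩ := mem_image.1 hcb
      have hpc₁ : p.1 = c := hf (hwf.fst_mem hp) (Succ_subset_V hc) (congrArg Prod.fst hpc)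
      refine mem_image.2 ⟨p.2, mem_Succ.2 ⟨hwf.snd_mem hp, ?_⟩, congrArg Prod.snd hpc⟩
      exact (mem_Succ.1 hc).2.tail (hpc₁ ▸ hp)
  · obtain ⟨b, hb', rfl⟩ := mem_image.1 hb
    exact mem_Succ.2 ⟨mem_image_of_mem f (Succ_subset_V hb'),
      (mem_Succ.1 hb').2.lift f fun _ _ h => mem_image_of_mem (Prod.map f f) h⟩

theorem map_Pred (ha : a ∈ G.V) : (G.map f).Pred (f a) = (G.Pred a).image f := by
  rw [← op_Succ, op_map hf hwf, map_Succ (G := op G) hf hwf.op ha, op_Succ]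

theorem map_erase (hS : S ⊆ G.V) : (G.map f).erase (S.image f) = (G.erase S).map f := by
  have hV : G.V.image f \ S.image f = (G.V \ S).image f := (image_sdiff_of_injOn hf hS).symm
  refine Pos.ext hV ?_ ?_
  · show (G.A.image (Prod.map f f)).filter _ = (G.A.filter _).image (Prod.map f f)
    rw [show (G.map f).V = G.V.image f from rfl, hV, filter_image]
    refine congrArg _ (filter_congr fun p hp => ?_)
    simp only [Prod.map_fst, Prod.map_snd]
    rw [mem_image_iff_of_injOn hf sdiff_subset (hwf.fst_mem hp),
      mem_image_iff_of_injOn hf sdiff_subset (hwf.snd_mem hp)]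
  · calc G.left.image f \ S.image f = (G.left.image f ∪ S.image f) \ S.image f :=
          (union_sdiff_right _ _).symm
      _ = ((G.left ∪ S) \ S).image f := by
          rw [← image_union, image_sdiff_of_injOn
            (hf.mono (coe_subset.2 (union_subset hwf.2 hS))) subset_union_right]
      _ = (G.left \ S).image f := by rw [union_sdiff_right]

theorem map_ForcL : (G.map f).ForcL = G.ForcL.image f := by
  ext b'
  rw [mem_ForcL]
  constructor
  · rintro ⟨hb, hs⟩
    obtain ⟨b, hbL, rfl⟩ := mem_image.1 hb
    rw [map_Succ hf hwf (hwf.2 hbL)] at hs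
    exact mem_image_of_mem f (mem_ForcL.2
      ⟨hbL, (image_subset_image_iff_of_injOn hf Succ_subset_V hwf.2).1 hs⟩)
  · intro h
    obtain ⟨b, hb, rfl⟩ := mem_image.1 h
    obtain ⟨hbL, hs⟩ := mem_ForcL.1 hb
    rw [map_Succ hf hwf (hwf.2 hbL)]
    exact ⟨mem_image_of_mem f hbL, image_subset_image hs⟩

theorem map_ForcR : (G.map f).ForcR = G.ForcR.image f := by
  rw [← op_ForcL, op_map hf hwf, map_ForcL (G := op G) hf hwf.op, op_ForcL]

theorem map_Forc : (G.map f).Forc = G.Forc.image f := by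
  rw [Forc, Forc, map_ForcL hf hwf, map_ForcR hf hwf, image_union]

theorem Relevant.map (hrel : G.Relevant) : (G.map f).Relevant := by
  rw [Relevant, map_Forc hf hwf, hrel, image_empty]

theorem map_Rmv (hv : v ∈ G.V) : (G.map f).Rmv (f v) = (G.Rmv v).image f := by
  have key : ∀ B ⊆ G.V,
      B.image f ∪ ((G.map f).erase (B.image f)).Forc = (B ∪ (G.erase B).Forc).image f :=
    fun B hB => by
      rw [map_erase hf hwf hB, map_Forc (hf.mono (coe_subset.2 sdiff_subset)) (hwf.erase B),
        image_union]
  have hL : f v ∈ (G.map f).left ↔ v ∈ G.left := mem_image_iff_of_injOn hf hwf.2 hv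
  unfold Rmv
  by_cases hvL : v ∈ G.left
  · rw [if_pos (hL.2 hvL), if_pos hvL, map_Succ hf hwf hv]; exact key _ Succ_subset_V
  · rw [if_neg (mt hL.1 hvL), if_neg hvL, map_Pred hf hwf hv]; exact key _ Pred_subset_V

theorem map_move (hv : v ∈ G.V) : (G.map f).move (f v) = (G.move v).map f := by
  rw [move, move, map_Rmv hf hwf hv, map_erase hf hwf (Rmv_subset_V hwf v)]

end Map

section Neg

variable {f : α → α}

def neg (f : α → α) (G : Pos α) : Pos α := (op G).map f

@[simp] theorem neg_V : (G.neg f).V = G.V.image f := rfl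

variable (hf : Set.InjOn f G.V) (hwf : G.WF)
include hf hwf

theorem neg_R : (G.neg f).R = G.left.image f := by
  rw [neg, map_R (G := op G) hf hwf.op, op_R hwf]

theorem Relevant.neg (hrel : G.Relevant) : (G.neg f).Relevant :=
  (hrel.op hwf).map (G := Pos.op G) hf hwf.op

theorem neg_Rmv (hv : v ∈ G.V) : (G.neg f).Rmv (f v) = (G.Rmv v).image f := by
  rw [neg, map_Rmv (G := op G) hf hwf.op hv, op_Rmv hwf hv]

theorem card_neg_Rmv (hv : v ∈ G.V) : #((G.neg f).Rmv (f v)) = #(G.Rmv v) := by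
  rw [neg_Rmv hf hwf hv]
  exact card_image_of_injOn (hf.mono (coe_subset.2 (Rmv_subset_V hwf v)))

theorem neg_move (hv : v ∈ G.V) : (G.neg f).move (f v) = (G.move v).neg f := by
  rw [neg, map_move (G := op G) hf hwf.op hv, op_move hwf hv, neg]

theorem op_neg : op (G.neg f) = (op G).neg f := op_map (G := op G) hf hwf.op

end Neg

theorem Relevant.V_eq_empty_of_R_eq_empty (hrel : G.Relevant) (hR : G.R = ∅) : G.V = ∅ := by
  have hVL : G.V ⊆ G.left := fun w hw => by
    by_contra h
    exact notMem_empty w (hR ▸ mem_R.2 ⟨hw, h⟩)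
  refine eq_empty_of_forall_notMem fun v hv => ?_
  have : v ∈ G.ForcL := mem_ForcL.2 ⟨hVL hv, Succ_subset_V.trans hVL⟩
  rw [hrel.ForcL_eq_empty] at this
  exact notMem_empty v this

theorem Relevant.V_eq_empty_of_left_eq_empty (hwf : G.WF) (hrel : G.Relevant)
    (hL : G.left = ∅) : G.V = ∅ :=
  (hrel.op hwf).V_eq_empty_of_R_eq_empty (by rw [op_R hwf, hL])

section Scores

theorem sL1Aux_zero (G : Pos α) : sL1Aux 0 G = 0 := by rw [sL1Aux]

theorem sL2Aux_zero (G : Pos α) : sL2Aux 0 G = 0 := by rw [sL2Aux]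

theorem sR1Aux_zero (G : Pos α) : sR1Aux 0 G = 0 := by rw [sR1Aux]

theorem sR2Aux_zero (G : Pos α) : sR2Aux 0 G = 0 := by rw [sR2Aux]

theorem sL1Aux_succ (k : ℕ) (G : Pos α) : sL1Aux (k + 1) G =
    if G.left.Nonempty then G.left.sup fun x => #(G.Rmv x) + sL2Aux k (G.move x) else 0 := by
  rw [sL1Aux]

theorem sL2Aux_succ (k : ℕ) (G : Pos α) : sL2Aux (k + 1) G =
    if h : G.R.Nonempty then G.R.inf' h fun y => sL1Aux k (G.move y) else 0 := by
  rw [sL2Aux]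

theorem sR1Aux_succ (k : ℕ) (G : Pos α) : sR1Aux (k + 1) G =
    if G.R.Nonempty then G.R.sup fun y => #(G.Rmv y) + sR2Aux k (G.move y) else 0 := by
  rw [sR1Aux]

theorem sR2Aux_succ (k : ℕ) (G : Pos α) : sR2Aux (k + 1) G =
    if h : G.left.Nonempty then G.left.inf' h fun x => sR1Aux k (G.move x) else 0 := by
  rw [sR2Aux]

theorem sLAux_succ_eq_self (hwf : G.WF) (k : ℕ) (hk : #G.V ≤ k) :
    sL1Aux (k + 1) G = sL1Aux k G ∧ sL2Aux (k + 1) G = sL2Aux k G := by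
  induction k generalizing G with
  | zero =>
    have hV : G.V = ∅ := card_eq_zero.1 (Nat.le_zero.1 hk)
    have hL : ¬ G.left.Nonempty := fun ⟨x, hx⟩ => by simpa [hV] using hwf.2 hx
    have hR : ¬ G.R.Nonempty := fun ⟨y, hy⟩ => by simpa [hV] using R_subset_V hy
    rw [sL1Aux_succ, sL2Aux_succ, if_neg hL, dif_neg hR, sL1Aux_zero, sL2Aux_zero]
    exact ⟨rfl, rfl⟩
  | succ k ih =>
    have ih' : ∀ v ∈ G.V, _ := fun v hv =>
      ih (hwf.move v) (Nat.le_of_lt_succ ((card_move_lt hwf hv).trans_le hk))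
    constructor
    · rw [sL1Aux_succ, sL1Aux_succ]
      congr 1
      exact sup_congr rfl fun x hx => by rw [(ih' x (hwf.2 hx)).2]
    · rw [sL2Aux_succ, sL2Aux_succ]
      by_cases hne : G.R.Nonempty
      · rw [dif_pos hne, dif_pos hne]
        exact inf'_congr hne rfl fun y hy => (ih' y (R_subset_V hy)).1
      · rw [dif_neg hne, dif_neg hne]

theorem sL1Aux_eq_sL1 (hwf : G.WF) {k : ℕ} (hk : #G.V ≤ k) : sL1Aux k G = G.sL1 :=
  Nat.le_induction rfl (fun k hk ih => (sLAux_succ_eq_self hwf k hk).1.trans ih) k hk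

theorem sL2Aux_eq_sL2 (hwf : G.WF) {k : ℕ} (hk : #G.V ≤ k) : sL2Aux k G = G.sL2 :=
  Nat.le_induction rfl (fun k hk ih => (sLAux_succ_eq_self hwf k hk).2.trans ih) k hk

theorem sL1_eq (hwf : G.WF) : G.sL1 =
    if G.left.Nonempty then G.left.sup fun x => #(G.Rmv x) + (G.move x).sL2 else 0 := by
  rw [sL1, ← (sLAux_succ_eq_self hwf _ le_rfl).1, sL1Aux_succ]
  congr 1
  exact sup_congr rfl fun x _ => by rw [sL2Aux_eq_sL2 (hwf.move x) (card_move_le x)]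

theorem sL2_eq (hwf : G.WF) : G.sL2 =
    if h : G.R.Nonempty then G.R.inf' h fun y => (G.move y).sL1 else 0 := by
  rw [sL2, ← (sLAux_succ_eq_self hwf _ le_rfl).2, sL2Aux_succ]
  by_cases hne : G.R.Nonempty
  · rw [dif_pos hne, dif_pos hne]
    exact inf'_congr hne rfl fun y _ => sL1Aux_eq_sL1 (hwf.move y) (card_move_le y)
  · rw [dif_neg hne, dif_neg hne]

theorem le_sL1 (hwf : G.WF) (hx : x ∈ G.left) : #(G.Rmv x) + (G.move x).sL2 ≤ G.sL1 := by
  rw [sL1_eq hwf, if_pos ⟨x, hx⟩]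
  exact le_sup (f := fun x => #(G.Rmv x) + (G.move x).sL2) hx

theorem sL1_le (hwf : G.WF) {n : ℕ} (h : ∀ x ∈ G.left, #(G.Rmv x) + (G.move x).sL2 ≤ n) :
    G.sL1 ≤ n := by
  rw [sL1_eq hwf]
  split_ifs
  exacts [Finset.sup_le h, Nat.zero_le n]

theorem sL2_le (hwf : G.WF) (hy : y ∈ G.R) : G.sL2 ≤ (G.move y).sL1 := by
  rw [sL2_eq hwf, dif_pos ⟨y, hy⟩]
  exact inf'_le _ hy

theorem exists_sL2_eq (hwf : G.WF) (hne : G.R.Nonempty) :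
    ∃ y ∈ G.R, G.sL2 = (G.move y).sL1 := by
  rw [sL2_eq hwf, dif_pos hne]
  exact exists_mem_eq_inf' hne _

theorem sL2Aux_le_sL1Aux_move (hy : y ∈ G.R) : ∀ k, sL2Aux k G ≤ sL1Aux (k - 1) (G.move y)
  | 0 => by rw [sL2Aux_zero]; exact Nat.zero_le _
  | k + 1 => by rw [sL2Aux_succ, dif_pos ⟨y, hy⟩]; exact inf'_le _ hy

theorem sLAux_op (hwf : G.WF) (k : ℕ) :
    sL1Aux k (op G) = sR1Aux k G ∧ sL2Aux k (op G) = sR2Aux k G := by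
  induction k generalizing G with
  | zero => rw [sL1Aux_zero, sL2Aux_zero, sR1Aux_zero, sR2Aux_zero]; exact ⟨rfl, rfl⟩
  | succ k ih =>
    constructor
    · rw [sL1Aux_succ, sR1Aux_succ, op_left]
      congr 1
      refine sup_congr rfl fun y hy => ?_
      rw [op_Rmv hwf (R_subset_V hy), op_move hwf (R_subset_V hy), (ih (hwf.move y)).2]
    · rw [sL2Aux_succ, sR2Aux_succ, op_R hwf]
      by_cases hne : G.left.Nonempty
      · rw [dif_pos hne, dif_pos hne]
        refine inf'_congr hne rfl fun x hx => ?_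
        rw [op_move hwf (hwf.2 hx), (ih (hwf.move x)).1]
      · rw [dif_neg hne, dif_neg hne]

theorem sR1_eq_sL1_op (hwf : G.WF) : G.sR1 = (op G).sL1 := (sLAux_op hwf _).1.symm

/-- Every vertex is eventually removed by one of the two players. -/
theorem sLAux_add_sRAux (k : ℕ) (hwf : G.WF) (hrel : G.Relevant) (hk : #G.V ≤ k) :
    sL1Aux k G + sR2Aux k G = #G.V ∧ sL2Aux k G + sR1Aux k G = #G.V := by
  induction k generalizing G with
  | zero =>
    rw [sL1Aux_zero, sL2Aux_zero, sR1Aux_zero, sR2Aux_zero]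
    omega
  | succ k ih =>
    have ih' : ∀ v ∈ G.V, _ := fun v hv => ih (hwf.move v) (hrel.move hwf hv)
      (Nat.le_of_lt_succ ((card_move_lt hwf hv).trans_le hk))
    constructor
    · rw [sL1Aux_succ, sR2Aux_succ]
      by_cases hne : G.left.Nonempty
      · rw [if_pos hne, dif_pos hne]
        refine sup_add_inf'_of_add_eq hne fun x hx => ?_
        have := (ih' x (hwf.2 hx)).2
        have := card_move_add hwf x
        omega
      · rw [if_neg hne, dif_neg hne,
          hrel.V_eq_empty_of_left_eq_empty hwf (not_nonempty_iff_eq_empty.1 hne)]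
        rfl
    · rw [sL2Aux_succ, sR1Aux_succ]
      by_cases hne : G.R.Nonempty
      · rw [dif_pos hne, if_pos hne, add_comm]
        refine sup_add_inf'_of_add_eq hne fun y hy => ?_
        have := (ih' y (R_subset_V hy)).1
        have := card_move_add hwf y
        omega
      · rw [dif_neg hne, if_neg hne,
          hrel.V_eq_empty_of_R_eq_empty (not_nonempty_iff_eq_empty.1 hne)]
        rfl

theorem sL1_add_sR2 (hwf : G.WF) (hrel : G.Relevant) : G.sL1 + G.sR2 = #G.V :=
  (sLAux_add_sRAux _ hwf hrel le_rfl).1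

theorem sL2_add_sR1 (hwf : G.WF) (hrel : G.Relevant) : G.sL2 + G.sR1 = #G.V :=
  (sLAux_add_sRAux _ hwf hrel le_rfl).2

end Scores

section Antitone

def RightMovesAntitone (G : Pos α) : Prop :=
  ∀ y ∈ G.R, (G.move y).sL1 ≤ G.sL1 ∧ (G.move y).sL2 ≤ G.sL2

theorem RightMovesAntitone.sL2_le_sL1 (h : G.RightMovesAntitone) (hwf : G.WF) :
    G.sL2 ≤ G.sL1 := by
  rcases G.R.eq_empty_or_nonempty with hR | hne
  · rw [sL2_eq hwf, dif_neg (not_nonempty_iff_eq_empty.2 hR)]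
    exact Nat.zero_le _
  · obtain ⟨y, hy, heq⟩ := exists_sL2_eq hwf hne
    exact heq ▸ (h y hy).1

variable (hwf : G.WF) (hrel : G.Relevant)
include hwf hrel

/-- After a Right move `y`, Left's best reply `x` is still available in `G` and is worth at
least as much there, since `y` can be played after `x`. -/
theorem sL1_move_le (hy : y ∈ G.R) (ih : ∀ x ∈ G.left, (G.move x).RightMovesAntitone) :
    (G.move y).sL1 ≤ G.sL1 := by
  refine sL1_le (hwf.move y) fun x hx => ?_
  obtain ⟨hxl, hxy⟩ := mem_move_left.1 hx
  have hyx := notMem_Rmv_of_notMem_Rmv hwf hrel hxl hy hxy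
  calc #((G.move y).Rmv x) + ((G.move y).move x).sL2
      ≤ #(G.Rmv x) + ((G.move x).move y).sL2 := by
        rw [Rmv_move_of_mem_R hwf hrel hxl hy hxy,
          move_move_comm_of_mem_left_of_mem_R hwf hrel hxl hy hxy]
        exact Nat.add_le_add_right (card_le_card sdiff_subset) _
    _ ≤ #(G.Rmv x) + (G.move x).sL2 :=
        Nat.add_le_add_left (ih x hxl y (mem_move_R.2 ⟨hy, hyx⟩)).2 _
    _ ≤ G.sL1 := le_sL1 hwf hxl

theorem sL2_move_le (hy : y ∈ G.R) (ih : ∀ z ∈ G.R, (G.move z).RightMovesAntitone) :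
    (G.move y).sL2 ≤ G.sL2 := by
  obtain ⟨y₀, hy₀, heq⟩ := exists_sL2_eq hwf ⟨y, hy⟩
  rw [heq]
  have hle₀ := (ih y₀ hy₀).sL2_le_sL1 (hwf.move y₀)
  by_cases h₀ : y₀ ∈ G.Rmv y
  · by_cases h : y ∈ G.Rmv y₀
    · rw [move_eq_move_of_mem_R hwf hrel hy hy₀ h₀ h]
      exact hle₀
    · rw [← move_move_of_mem_R hwf hrel hy₀ hy h h₀]
      exact (ih y₀ hy₀ y (mem_move_R.2 ⟨hy, h⟩)).2.trans hle₀
  · refine (sL2_le (hwf.move y) (mem_move_R.2 ⟨hy₀, h₀⟩)).trans ?_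
    by_cases h : y ∈ G.Rmv y₀
    · rw [move_move_of_mem_R hwf hrel hy hy₀ h₀ h]
    · rw [move_move_comm_of_mem_R hwf hrel hy hy₀ h₀ h]
      exact (ih y₀ hy₀ y (mem_move_R.2 ⟨hy, h⟩)).1

theorem rightMovesAntitone : G.RightMovesAntitone := by
  induction hn : #G.V using Nat.strong_induction_on generalizing G with
  | _ n ih =>
    have ih' : ∀ z ∈ G.V, (G.move z).RightMovesAntitone := fun z hz =>
      ih _ (hn ▸ card_move_lt hwf hz) (hwf.move z) (hrel.move hwf hz) rfl
    exact fun y hy => ⟨sL1_move_le hwf hrel hy fun x hx => ih' x (hwf.2 hx),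
      sL2_move_le hwf hrel hy fun z hz => ih' z (R_subset_V hz)⟩

theorem sL2_le_sL1 : G.sL2 ≤ G.sL1 := (rightMovesAntitone hwf hrel).sL2_le_sL1 hwf

end Antitone

section Mirror

variable {f : α → α} {H : Pos α}

structure NegPair (f : α → α) (H : Pos α) : Prop where
  wf : H.WF
  relevant : H.Relevant
  injOn : Set.InjOn f H.V
  disjoint : Disjoint H.V (H.V.image f)

namespace NegPair

variable (h : NegPair f H)
include h

theorem wf_neg : (H.neg f).WF := h.wf.op.map f

theorem relevant_neg : (H.neg f).Relevant := h.relevant.neg h.injOn h.wf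

theorem wf_union : (H.union (H.neg f)).WF := h.wf.union h.wf_neg

theorem relevant_union : (H.union (H.neg f)).Relevant :=
  Relevant.union h.wf h.wf_neg h.disjoint h.relevant h.relevant_neg

theorem card_union : #(H.union (H.neg f)).V = 2 * #H.V := by
  rw [union_V, neg_V, card_union_of_disjoint h.disjoint, card_image_of_injOn h.injOn]
  ring

theorem move (hv : v ∈ H.V) : NegPair f (H.move v) :=
  ⟨h.wf.move v, h.relevant.move h.wf hv, h.injOn.mono (coe_subset.2 sdiff_subset),
    disjoint_of_subset_left sdiff_subset
      (disjoint_of_subset_right (image_subset_image sdiff_subset) h.disjoint)⟩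

protected theorem op : NegPair f (op H) := ⟨h.wf.op, h.relevant.op h.wf, h.injOn, h.disjoint⟩

theorem op_union : op (H.union (H.neg f)) = (op H).union ((op H).neg f) := by
  rw [Pos.op_union h.wf h.wf_neg h.disjoint, op_neg h.injOn h.wf]

theorem exists_mirror {u : α} (hu : u ∈ (H.union (H.neg f)).left) :
    ∃ v ∈ H.V, #((H.union (H.neg f)).Rmv u) = #(H.Rmv v) ∧
      ∃ r ∈ ((H.union (H.neg f)).move u).R,
        ((H.union (H.neg f)).move u).move r = (H.move v).union ((H.move v).neg f) := by
  rcases mem_union.1 hu with hx | hu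
  · have hx' := h.wf.2 hx
    have hd : Disjoint (H.move u).V (H.neg f).V := disjoint_of_subset_left sdiff_subset h.disjoint
    rw [move_union_left h.wf h.wf_neg h.disjoint h.relevant_neg hx']
    refine ⟨u, hx', by rw [Rmv_union_left h.wf h.wf_neg h.disjoint h.relevant_neg hx'],
      f u, ?_, ?_⟩
    · rw [R_union (h.wf.move u) h.wf_neg hd, neg_R h.injOn h.wf]
      exact mem_union_right _ (mem_image_of_mem f hx)
    · rw [move_union_right (h.wf.move u) h.wf_neg hd (h.relevant.move h.wf hx')
        (mem_image_of_mem f hx'), neg_move h.injOn h.wf hx']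
  · obtain ⟨y, hy, rfl⟩ := mem_image.1 hu
    have hy' := R_subset_V hy
    have hm := h.move hy'
    have hd : Disjoint H.V ((H.move y).neg f).V :=
      disjoint_of_subset_right (image_subset_image sdiff_subset) h.disjoint
    rw [move_union_right h.wf h.wf_neg h.disjoint h.relevant (mem_image_of_mem f hy'),
      neg_move h.injOn h.wf hy']
    refine ⟨y, hy', ?_, y, ?_, ?_⟩
    · rw [Rmv_union_right h.wf h.wf_neg h.disjoint h.relevant (mem_image_of_mem f hy'),
        card_neg_Rmv h.injOn h.wf hy']
    · rw [R_union h.wf hm.wf_neg hd]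
      exact mem_union_left _ hy
    · rw [move_union_left h.wf hm.wf_neg hd hm.relevant_neg hy']

omit h in
theorem sL1Aux_union_neg_le (k : ℕ) : ∀ {H : Pos α}, NegPair f H →
    sL1Aux k (H.union (H.neg f)) ≤ #H.V := by
  induction k using Nat.strong_induction_on with
  | _ k ih =>
    intro H h
    rcases k with _ | k
    · rw [sL1Aux_zero]; exact Nat.zero_le _
    rw [sL1Aux_succ]
    split_ifs
    · refine Finset.sup_le fun u hu => ?_
      obtain ⟨v, hv, hcard, r, hr, hmove⟩ := h.exists_mirror hu
      calc #((H.union (H.neg f)).Rmv u) + sL2Aux k ((H.union (H.neg f)).move u)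
          ≤ #(H.Rmv v) + sL1Aux (k - 1) (((H.union (H.neg f)).move u).move r) :=
            hcard ▸ Nat.add_le_add_left (sL2Aux_le_sL1Aux_move hr k) _
        _ ≤ #(H.Rmv v) + #(H.move v).V :=
            hmove ▸ Nat.add_le_add_left (ih (k - 1) (by omega) (h.move hv)) _
        _ = #H.V := by rw [add_comm, card_move_add h.wf]
    · exact Nat.zero_le _

theorem sL1_union_neg_le : (H.union (H.neg f)).sL1 ≤ #H.V := sL1Aux_union_neg_le _ h

theorem sR1_union_neg_le : (H.union (H.neg f)).sR1 ≤ #H.V := by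
  rw [sR1_eq_sL1_op h.wf_union, h.op_union]
  exact h.op.sL1_union_neg_le

end NegPair

end Mirror

end Influence.Pos

/-- `H + (−H)` has Left score and Right score `0`, where `−H` is a disjoint
copy of `H` with the colours exchanged and all arcs reversed. -/
theorem influence_sum_with_negative {α : Type} [DecidableEq α] (H H' : Pos α)
    (hwf : H.WF) (hrel : H.Relevant) (f : α → α)
    (hinj : Set.InjOn f ↑H.V)
    (hV : H'.V = H.V.image f)
    (hL : H'.left = H.R.image f)
    (hA : H'.A = H.A.image (fun p => (f p.2, f p.1)))
    (hdisj : Disjoint H.V H'.V) :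
    (H.union H').Ls = 0 ∧ (H.union H').Rs = 0 := by
  obtain rfl : H' = H.neg f := Pos.ext hV (by rw [hA, neg, Pos.map, Pos.op, image_image]; rfl) hL
  have h : NegPair f H := ⟨hwf, hrel, hinj, hdisj⟩
  have hL1 := h.sL1_union_neg_le
  have hR1 := h.sR1_union_neg_le
  have hL1R2 := sL1_add_sR2 h.wf_union h.relevant_union
  have hL2R1 := sL2_add_sR1 h.wf_union h.relevant_union
  have hL2L1 := sL2_le_sL1 h.wf_union h.relevant_union
  have hcard := h.card_union
  simp only [Ls, Rs]
  omega
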